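/- arXiv:1807.00158 — 6 statements merged into one kernel-verified Lean document; each statement's English description precedes it below -/
import Mathlib

section
/- Let φ : A → B be a homomorphism of commutative rings such that Spec(B) → Spec(A) is a universal homeomorphism, i.e. φ is integral, the induced map on prime spectra is bijective, and for every prime q ⊂ B the residue field extension κ(φ⁻¹(q)) ⊆ κ(q) is purely inseparable. Let C ⊆ B be an A-subalgebra. Then both induced maps Spec(B) → Spec(C) and Spec(C) → Spec(A) are universal homeomorphisms in the same sense: B is integral over C and C is integral over A, both induced maps on prime spectra are bijective, and all residue field extensions are purely inseparable. -/
/-!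
STATEMENT 0: If `φ : A → B` is a uh-morphism (integral, bijective on prime spectra,
purely inseparable residue field extensions) and `C ⊆ B` is an `A`-subalgebra, then
both `Spec(B) → Spec(C)` and `Spec(C) → Spec(A)` are universal homeomorphisms in
the same sense.
-/

open IsLocalRing in
/-- The induced map on residue fields at a prime `q ⊆ B` and its preimage `φ⁻¹(q) ⊆ A`. -/
noncomputable def residueFieldHom {A B : Type*} [CommRing A] [CommRing B] (φ : A →+* B)
    (q : Ideal B) [q.IsPrime] :
    ResidueField (Localization.AtPrime (q.comap φ)) →+* ResidueField (Localization.AtPrime q) :=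
  letI := Localization.isLocalHom_localRingHom (q.comap φ) q φ rfl
  ResidueField.map (Localization.localRingHom (q.comap φ) q φ rfl)

/-- `φ` induces purely inseparable residue field extensions at every prime. -/
def RingHom.PurelyInseparableResidues {A B : Type*} [CommRing A] [CommRing B] (φ : A →+* B) : Prop :=
  ∀ (q : Ideal B) (_ : q.IsPrime),
    letI := ‹q.IsPrime›
    letI := (residueFieldHom φ q).toAlgebra
    IsPurelyInseparable (IsLocalRing.ResidueField (Localization.AtPrime (q.comap φ)))
      (IsLocalRing.ResidueField (Localization.AtPrime q))

/-- `Spec(B) → Spec(A)` is a universal homeomorphism: `φ` is integral, the induced map on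
prime spectra is bijective, and all residue field extensions are purely inseparable. -/
def RingHom.IsUhMorphism {A B : Type*} [CommRing A] [CommRing B] (φ : A →+* B) : Prop :=
  φ.IsIntegral ∧ Function.Bijective (PrimeSpectrum.comap φ) ∧ φ.PurelyInseparableResidues

/-!
Since `C → B` is injective and `B` is integral over `C`, lying over makes `Spec B → Spec C`
surjective; as the composite `Spec B → Spec A` is bijective, both factors are bijective.
The residue fields form towers `κ(p) ⊆ κ(q ∩ C) ⊆ κ(q)`, and pure inseparability of the whole
tower passes to its top and its bottom; every prime of `C` is some `q ∩ C` by surjectivity.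
-/

open IsLocalRing in
lemma residueFieldHom_comp {A B C : Type*} [CommRing A] [CommRing B] [CommRing C]
    (f : A →+* B) (g : B →+* C) (q : Ideal C) [q.IsPrime] :
    residueFieldHom (g.comp f) q =
      (residueFieldHom g q).comp (residueFieldHom f (q.comap g)) := by
  refine RingHom.ext fun x => ?_
  obtain ⟨a, rfl⟩ := residue_surjective x
  simp only [residueFieldHom, ResidueField.map_residue]
  exact congrArg (residue _) (DFunLike.congr_fun
    (Localization.localRingHom_comp ((q.comap g).comap f) (q.comap g) q f rfl g rfl) a)

section FieldTower

variable {F E K : Type*} [Field F] [Field E] [Field K] (i : F →+* E) (j : E →+* K)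

lemma RingHom.isPurelyInseparable_tower_top_of_comp
    (h : letI := (j.comp i).toAlgebra; IsPurelyInseparable F K) :
    letI := j.toAlgebra; IsPurelyInseparable E K := by
  let := i.toAlgebra
  let := j.toAlgebra
  let := (j.comp i).toAlgebra
  have : IsScalarTower F E K := IsScalarTower.of_algebraMap_eq' rfl
  exact IsPurelyInseparable.tower_top F E K

lemma RingHom.isPurelyInseparable_tower_bot_of_comp
    (h : letI := (j.comp i).toAlgebra; IsPurelyInseparable F K) :
    letI := i.toAlgebra; IsPurelyInseparable F E := by
  let := i.toAlgebra
  let := j.toAlgebra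
  let := (j.comp i).toAlgebra
  have : IsScalarTower F E K := IsScalarTower.of_algebraMap_eq' rfl
  exact IsPurelyInseparable.tower_bot F E K

end FieldTower

namespace RingHom

variable {A B C : Type*} [CommRing A] [CommRing B] [CommRing C] {f : A →+* B} {g : B →+* C}

lemma PurelyInseparableResidues.of_comp_right (h : (g.comp f).PurelyInseparableResidues) :
    g.PurelyInseparableResidues := by
  intro q hq
  have hq' := h q hq
  rw [residueFieldHom_comp] at hq'
  exact isPurelyInseparable_tower_top_of_comp _ _ hq'

lemma PurelyInseparableResidues.of_comp_left (h : (g.comp f).PurelyInseparableResidues)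
    (hg : Function.Surjective (PrimeSpectrum.comap g)) : f.PurelyInseparableResidues := by
  intro p hp
  obtain ⟨Q, hQ⟩ := hg ⟨p, hp⟩
  obtain rfl : Q.asIdeal.comap g = p := congrArg PrimeSpectrum.asIdeal hQ
  have hQ' := h Q.asIdeal Q.isPrime
  rw [residueFieldHom_comp] at hQ'
  exact isPurelyInseparable_tower_bot_of_comp _ _ hQ'

lemma IsUhMorphism.of_comp (h : (g.comp f).IsUhMorphism) (hg : Function.Injective g) :
    g.IsUhMorphism ∧ f.IsUhMorphism := by
  obtain ⟨hint, hbij, hres⟩ := h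
  have hgint : g.IsIntegral := hint.tower_top f g
  have hgspec_surj : Function.Surjective (PrimeSpectrum.comap g) := hgint.comap_surjective hg
  rw [PrimeSpectrum.comap_comp] at hbij
  have hgspec : Function.Bijective (PrimeSpectrum.comap g) :=
    ⟨Function.Injective.of_comp hbij.1, hgspec_surj⟩
  exact ⟨⟨hgint, hgspec, hres.of_comp_right⟩,
    ⟨hint.tower_bot f g hg, (Function.Bijective.of_comp_iff _ hgspec).1 hbij,
      hres.of_comp_left hgspec_surj⟩⟩

end RingHom

theorem uh_factors_through_subalgebra {A B : Type*} [CommRing A] [CommRing B] [Algebra A B]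
    (huh : (algebraMap A B).IsUhMorphism) (C : Subalgebra A B) :
    (C.val.toRingHom).IsUhMorphism ∧ (algebraMap A C).IsUhMorphism :=
  RingHom.IsUhMorphism.of_comp (f := algebraMap A C) huh Subtype.val_injective
end

section
/- Let f : Y → X be a separated morphism of schemes which is injective on underlying topological spaces and such that for every y ∈ Y the residue field extension κ(f(y)) ⊆ κ(y) is purely inseparable (for example, f a separated universal homeomorphism). Then for every reduced scheme T and every pair of morphisms t, t' : T → Y with f ∘ t = f ∘ t', one has t = t'. -/
/-!
By Stacks 01S4, injectivity with purely inseparable residue field extensions makes `f`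
universally injective, i.e. a morphism `Spec K ⟶ Y` from the spectrum of a field is determined by
its composite with `f`. Hence `t` and `t'` agree on every `Spec κ(x) ⟶ T`. Since `f` is separated,
the equalizer of `t` and `t'` is a closed subscheme of `T` containing every point, so it is all of
`T` because `T` is reduced.
-/

open AlgebraicGeometry CategoryTheory

universe u

namespace AlgebraicGeometry

variable {X Y : Scheme.{u}} (f : Y ⟶ X)

lemma UniversallyInjective.of_injective_of_isPurelyInseparable (hinj : Function.Injective f)
    (hpi : ∀ y, (f.residueFieldMap y).hom.IsPurelyInseparable) : UniversallyInjective f :=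
  ((tfae_universallyInjective f).out 2 0).mp (And.intro hinj hpi)

lemma UniversallyInjective.eq_of_comp_eq_of_field [UniversallyInjective f] {K : Type u}
    [Field K] {a b : Spec (.of K) ⟶ Y} (h : a ≫ f = b ≫ f) : a = b := by
  have hiff := (tfae_universallyInjective f).out 0 1
  exact hiff.mp ‹_› K h

lemma UniversallyInjective.eq_of_comp_eq [UniversallyInjective f] [IsSeparated f]
    {T : Scheme.{u}} [IsReduced T] {t t' : T ⟶ Y} (h : t ≫ f = t' ≫ f) : t = t' :=
  ext_of_fromSpecResidueField_eq t t' f Set.univ dense_univ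
    (fun x _ ↦ eq_of_comp_eq_of_field f (K := T.residueField x)
      (by rw [Category.assoc, Category.assoc, h])) h

end AlgebraicGeometry

theorem eq_of_comp_eq_of_injective_of_purelyInseparable
    {Y X : AlgebraicGeometry.Scheme} (f : Y ⟶ X) [AlgebraicGeometry.IsSeparated f]
    (hinj : Function.Injective f.base)
    (hpi : ∀ y : Y, letI := (f.residueFieldMap y).hom.toAlgebra;
      IsPurelyInseparable (X.residueField (f.base y)) (Y.residueField y))
    (T : AlgebraicGeometry.Scheme) [AlgebraicGeometry.IsReduced T]
    (t t' : T ⟶ Y) (h : t ≫ f = t' ≫ f) : t = t' := by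
  have := UniversallyInjective.of_injective_of_isPurelyInseparable f hinj hpi
  exact UniversallyInjective.eq_of_comp_eq f h
end

section
/- Let R be a henselian valuation ring of characteristic p > 0 with fraction field K, let K ⊆ K' be a purely inseparable extension of fields, and let R' be the integral closure of R in K'. Then R' is a valuation ring with fraction field K', the extension R ⊆ R' is integral, the induced map Spec(R') → Spec(R) is bijective, and for every prime q ⊂ R' the residue field extension κ(q ∩ R) ⊆ κ(q) is purely inseparable; that is, Spec(R') → Spec(R) is a universal homeomorphism. -/
section PowPowMemRange

variable {R S : Type*} [CommRing R] [CommRing S] {p : ℕ}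

theorem RingHom.pow_pow_add_mem_range (f : R →+* S) {x : S} {m : ℕ}
    (h : x ^ p ^ m ∈ f.range) (k : ℕ) : x ^ p ^ (m + k) ∈ f.range := by
  rw [pow_add, pow_mul]
  exact pow_mem h _

theorem Localization.exists_pow_pow_mem_range_localRingHom (f : R →+* S)
    (H : ∀ x : S, ∃ n, x ^ p ^ n ∈ f.range) (q : Ideal S) [q.IsPrime]
    (y : Localization.AtPrime q) :
    ∃ n, y ^ p ^ n ∈ (Localization.localRingHom (q.comap f) q f rfl).range := by
  obtain ⟨x, s, rfl⟩ := IsLocalization.exists_mk'_eq q.primeCompl y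
  obtain ⟨m, hm⟩ := H x
  obtain ⟨k, hk⟩ := H s
  obtain ⟨a, ha⟩ := f.pow_pow_add_mem_range hm k
  obtain ⟨b, hb⟩ := f.pow_pow_add_mem_range hk m
  rw [add_comm] at hb
  have hb_compl : b ∈ (q.comap f).primeCompl := fun hbq ↦ by
    rw [SetLike.mem_coe, Ideal.mem_comap, hb] at hbq
    exact s.2 (Ideal.IsPrime.mem_of_pow_mem ‹_› _ hbq)
  refine ⟨m + k, IsLocalization.mk' _ a ⟨b, hb_compl⟩, ?_⟩
  rw [Localization.localRingHom_mk', ← IsLocalization.mk'_pow, ha]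
  congr 1
  exact Subtype.ext hb

theorem IsLocalRing.ResidueField.exists_pow_pow_mem_range_map [IsLocalRing R] [IsLocalRing S]
    (f : R →+* S) [IsLocalHom f] (H : ∀ y : S, ∃ n, y ^ p ^ n ∈ f.range)
    (z : ResidueField S) : ∃ n, z ^ p ^ n ∈ (ResidueField.map f).range := by
  obtain ⟨y, rfl⟩ := residue_surjective z
  obtain ⟨n, a, ha⟩ := H y
  exact ⟨n, residue R a, by rw [ResidueField.map_residue, ha, map_pow]⟩

theorem RingHom.purelyInseparableResidues_of_pow_pow_mem_range [CharP R p] (hp : p.Prime)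
    (f : R →+* S) (H : ∀ x : S, ∃ n, x ^ p ^ n ∈ f.range) :
    f.PurelyInseparableResidues := by
  intro q _
  let := (residueFieldHom f q).toAlgebra
  have : CharP (IsLocalRing.ResidueField (Localization.AtPrime (q.comap f))) p :=
    (CharP.charP_iff_prime_eq_zero hp).mpr <| by
      rw [← map_natCast (algebraMap R _), CharP.cast_eq_zero, map_zero]
  have : ExpChar (IsLocalRing.ResidueField (Localization.AtPrime (q.comap f))) p :=
    ExpChar.prime hp
  have := Localization.isLocalHom_localRingHom (q.comap f) q f rfl
  rw [isPurelyInseparable_iff_pow_mem _ p]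
  exact IsLocalRing.ResidueField.exists_pow_pow_mem_range_map _
    (Localization.exists_pow_pow_mem_range_localRingHom f H q)

theorem RingHom.isUhMorphism_of_pow_pow_mem_range [CharP R p] (hp : p.Prime) (f : R →+* S)
    (H : ∀ x : S, ∃ n, x ^ p ^ n ∈ f.range) (hker : RingHom.ker f ≤ nilradical R) :
    f.IsUhMorphism := by
  have H_pos : ∀ x : S, ∃ n > 0, x ^ n ∈ f.range := fun x ↦
    let ⟨n, hn⟩ := H x
    ⟨p ^ n, pow_pos hp.pos n, hn⟩
  refine ⟨fun x ↦ ?_, (PrimeSpectrum.isHomeomorph_comap f H_pos hker).bijective,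
    f.purelyInseparableResidues_of_pow_pow_mem_range hp H⟩
  algebraize [f]
  obtain ⟨n, hn, a, ha⟩ := H_pos x
  exact IsIntegral.of_pow hn (ha ▸ isIntegral_algebraMap)

end PowPowMemRange

section IntegralClosure

variable {R : Type*} (K : Type*) {K' : Type*} [CommRing R] [Field K] [Field K']
  [Algebra R K] [IsFractionRing R K] [Algebra K K'] [Algebra R K'] [IsScalarTower R K K']
include K

theorem integralClosure.algebraMap_injective :
    Function.Injective (algebraMap R (integralClosure R K')) := by
  have h : Function.Injective (algebraMap R K') := by
    rw [IsScalarTower.algebraMap_eq R K K']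
    exact (algebraMap K K').injective.comp (IsFractionRing.injective R K)
  exact fun a b hab ↦ h (congrArg Subtype.val hab)

variable [IsPurelyInseparable K K']

theorem integralClosure.exists_pow_pow_mem_range_algebraMap [IsIntegrallyClosed R] (p : ℕ)
    [ExpChar K p] (x : integralClosure R K') :
    ∃ n, x ^ p ^ n ∈ (algebraMap R (integralClosure R K')).range := by
  obtain ⟨n, y, hy⟩ := IsPurelyInseparable.pow_mem K p (x : K')
  have hy_int : IsIntegral R y := by
    rw [← isIntegral_algebraMap_iff (algebraMap K K').injective, hy]
    exact x.2.pow _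
  obtain ⟨r, rfl⟩ := IsIntegrallyClosed.isIntegral_iff.mp hy_int
  exact ⟨n, r, Subtype.ext <| (IsScalarTower.algebraMap_apply R K K' r).trans hy⟩

variable [IsDomain R] [ValuationRing R]

theorem mem_integralClosure_or_inv_mem (x : K') :
    x ∈ integralClosure R K' ∨ x⁻¹ ∈ integralClosure R K' := by
  obtain ⟨n, y, hy⟩ := IsPurelyInseparable.pow_mem K (ringExpChar K) x
  have hn : 0 < ringExpChar K ^ n := pow_pos (expChar_pos K _) n
  rcases ValuationRing.isInteger_or_isInteger R y with ⟨r, rfl⟩ | ⟨r, hr⟩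
  · refine Or.inl (IsIntegral.of_pow hn ?_)
    rw [← hy, ← IsScalarTower.algebraMap_apply]
    exact isIntegral_algebraMap
  · refine Or.inr (IsIntegral.of_pow hn ?_)
    rw [inv_pow, ← hy, ← map_inv₀, ← hr, ← IsScalarTower.algebraMap_apply]
    exact isIntegral_algebraMap

variable (R K') in
def integralClosure.valuationSubring : ValuationSubring K' where
  toSubring := (integralClosure R K').toSubring
  mem_or_inv_mem' := mem_integralClosure_or_inv_mem K

theorem integralClosure.valuationRing : ValuationRing (integralClosure R K') :=
  inferInstanceAs (ValuationRing (integralClosure.valuationSubring R K K'))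

theorem integralClosure.isFractionRing : IsFractionRing (integralClosure R K') K' :=
  inferInstanceAs (IsFractionRing (integralClosure.valuationSubring R K K') K')

end IntegralClosure

theorem integralClosure_in_purelyInseparable_of_henselian_valuation_ring_general
    (p : ℕ) (hp : p.Prime)
    {R : Type*} [CommRing R] [IsDomain R] [ValuationRing R] [CharP R p]
    {K' : Type*} [Field K'] [Algebra (FractionRing R) K']
    [IsPurelyInseparable (FractionRing R) K']
    [Algebra R K'] [IsScalarTower R (FractionRing R) K'] :
    IsDomain (integralClosure R K') ∧
    ValuationRing (integralClosure R K') ∧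
    IsFractionRing (integralClosure R K') K' ∧
    RingHom.IsUhMorphism (algebraMap R (integralClosure R K')) := by
  have : ExpChar (FractionRing R) p := ExpChar.prime hp
  have hker : RingHom.ker (algebraMap R (integralClosure R K')) ≤ nilradical R := by
    rw [(RingHom.injective_iff_ker_eq_bot _).mp
      (integralClosure.algebraMap_injective (FractionRing R))]
    exact bot_le
  exact ⟨inferInstance, integralClosure.valuationRing (FractionRing R),
    integralClosure.isFractionRing (FractionRing R),
    (algebraMap R _).isUhMorphism_of_pow_pow_mem_range hp
      (integralClosure.exists_pow_pow_mem_range_algebraMap (FractionRing R) p) hker⟩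

theorem integralClosure_in_purelyInseparable_of_henselian_valuation_ring
    (p : ℕ) (hp : p.Prime)
    {R : Type*} [CommRing R] [IsDomain R] [ValuationRing R] [HenselianLocalRing R] [CharP R p]
    {K' : Type*} [Field K'] [Algebra (FractionRing R) K']
    [IsPurelyInseparable (FractionRing R) K']
    [Algebra R K'] [IsScalarTower R (FractionRing R) K'] :
    IsDomain (integralClosure R K') ∧
    ValuationRing (integralClosure R K') ∧
    IsFractionRing (integralClosure R K') K' ∧
    RingHom.IsUhMorphism (algebraMap R (integralClosure R K')) :=
  integralClosure_in_purelyInseparable_of_henselian_valuation_ring_general p hp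
end

section
/- Let K be a field, l a prime number, and A a nonzero K-algebra which is finite-dimensional as a K-vector space with l ∤ dim_K A. Then A has a maximal ideal m such that A/m is a finite field extension of K whose degree [A/m : K] is prime to l. -/
/-!
Contrapositive, for all finite-dimensional modules `M` over an Artinian `K`-algebra `A` at once:
if `l` divides `[A/m : K]` for every maximal ideal `m`, then `l ∣ dim_K M`. Induct on `dim_K M`.
A nonzero `M` has an associated prime `m`, i.e. an embedding `A/m ↪ M`; `m` is maximal because
`A` is Artinian. Then `dim_K M = [A/m : K] + dim_K (M / (A/m))`, and the quotient is smaller.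
-/

open Module

theorem finrank_range_eq_finrank_of_injective {K A M N : Type*} [Field K] [CommRing A]
    [Algebra K A] [AddCommGroup M] [Module A M] [Module K M] [IsScalarTower K A M]
    [AddCommGroup N] [Module A N] [Module K N] [IsScalarTower K A N]
    {f : M →ₗ[A] N} (hf : Function.Injective f) :
    finrank K (LinearMap.range f) = finrank K M :=
  ((LinearEquiv.ofInjective f hf).restrictScalars K).finrank_eq.symm

theorem finrank_quotient_add_finrank_restrictScalars {K A M : Type*} [Field K] [Ring A]
    [Algebra K A] [AddCommGroup M] [Module A M] [Module K M] [IsScalarTower K A M]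
    [FiniteDimensional K M] (N : Submodule A M) :
    finrank K (M ⧸ N) + finrank K N = finrank K M := by
  rw [← (Submodule.Quotient.restrictScalarsEquiv K N).finrank_eq]
  exact (N.restrictScalars K).finrank_quotient_add_finrank

theorem dvd_finrank_of_forall_dvd_finrank_quotient {K A M : Type*} [Field K] [CommRing A]
    [Algebra K A] [IsArtinianRing A] [AddCommGroup M] [Module A M] [Module K M]
    [IsScalarTower K A M] [FiniteDimensional K M] {l : ℕ}
    (h : ∀ m : Ideal A, m.IsMaximal → l ∣ finrank K (A ⧸ m)) : l ∣ finrank K M := by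
  induction hn : finrank K M using Nat.strong_induction_on generalizing M with
  | _ n ih =>
  subst hn
  cases subsingleton_or_nontrivial M with
  | inl _ => simp [finrank_zero_of_subsingleton]
  | inr _ =>
  obtain ⟨m, hm⟩ := associatedPrimes.nonempty A M
  obtain ⟨_, f, hf⟩ := (isAssociatedPrime_iff_exists_injective_linearMap m M).mp hm
  have hmax : m.IsMaximal := IsArtinianRing.isMaximal_of_isPrime m
  have : Nontrivial (A ⧸ m) := Ideal.Quotient.nontrivial_iff.mpr hmax.ne_top
  have hrange : finrank K (LinearMap.range f) = finrank K (A ⧸ m) :=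
    finrank_range_eq_finrank_of_injective hf
  have : Nontrivial (LinearMap.range f) := (LinearEquiv.ofInjective f hf).symm.nontrivial
  have : Module.Finite K (LinearMap.range f) :=
    .of_injective ((LinearMap.range f).restrictScalars K).subtype Subtype.val_injective
  have hpos : 0 < finrank K (LinearMap.range f) := finrank_pos
  have hsum := finrank_quotient_add_finrank_restrictScalars (K := K) (LinearMap.range f)
  rw [← hsum]
  exact dvd_add (ih _ (by omega) rfl) (hrange ▸ h m hmax)

theorem exists_maximal_ideal_residue_degree_prime_to_l_general
    {K A : Type*} [Field K] [CommRing A] [Algebra K A]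
    [FiniteDimensional K A] (l : ℕ)
    (hld : ¬ l ∣ Module.finrank K A) :
    ∃ m : Ideal A, m.IsMaximal ∧ FiniteDimensional K (A ⧸ m) ∧
      ¬ l ∣ Module.finrank K (A ⧸ m) := by
  have : IsArtinianRing A := isArtinian_of_tower K inferInstance
  by_contra! hdvd
  exact hld (dvd_finrank_of_forall_dvd_finrank_quotient fun m hm ↦ hdvd m hm inferInstance)

theorem exists_maximal_ideal_residue_degree_prime_to_l
    {K A : Type*} [Field K] [CommRing A] [Nontrivial A] [Algebra K A]
    [FiniteDimensional K A] (l : ℕ) (hl : l.Prime)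
    (hld : ¬ l ∣ Module.finrank K A) :
    ∃ m : Ideal A, m.IsMaximal ∧ FiniteDimensional K (A ⧸ m) ∧
      ¬ l ∣ Module.finrank K (A ⧸ m) :=
  exists_maximal_ideal_residue_degree_prime_to_l_general l hld
end

section
/- Let (A_λ)_{λ ∈ Λ} be a filtered system of commutative rings with colimit A, and let B be an A-algebra which is free of finite rank n as an A-module, admitting an A-module basis whose first element is the unit 1 of B. Then there exist an index λ ∈ Λ and an A_λ-algebra B_λ which is free of rank n as an A_λ-module, together with an isomorphism of A-algebras A ⊗_{A_λ} B_λ ≅ B. -/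
/-!
STATEMENT 14: A finite free algebra (with a basis starting with 1) over a filtered colimit
of rings descends to a finite free algebra over some stage of the system.
-/

open scoped TensorProduct

universe u v

/-- A packaged `R`-algebra. -/
structure AlgebraPkg (R : Type u) [CommRing R] : Type (u + 1) where
  carrier : Type u
  [commRing : CommRing carrier]
  [algebra : Algebra R carrier]

attribute [instance] AlgebraPkg.commRing AlgebraPkg.algebra

/-!
Let `L k` be the matrix of multiplication by `b k` in the basis `b`. These matrices satisfy
finitely many identities: `L k * L l = ∑ m, (L k) m l • L m`, they commute, `L e = 1` for the
index `e` of the unit, and the `e`-th columns of the `L k` form the identity matrix. Their entries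
lift to some stage of the system, and the identities, holding in the colimit, already hold at a
later stage `A_j`. Over any ring, matrices satisfying these identities span a commutative
subalgebra of the matrix ring which is free on them, the `e`-th column giving the coordinates.
Over `A_j` this subalgebra maps to `B` through the injective regular representation
`B → Matrix A`, and after base change to `A` its basis is sent to `b`.
-/

open Filter

variable {κ : Type*} [Fintype κ] [DecidableEq κ]

structure IsMulTable {R : Type*} [CommRing R] (L : κ → Matrix κ κ R) (e : κ) : Prop where
  mul_eq_sum : ∀ k l, L k * L l = ∑ m, L k m l • L m
  commute : ∀ k l, Commute (L k) (L l)
  unit_eq_one : L e = 1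
  col_eq_one : Matrix.of (fun m k => L k m e) = 1

theorem isMulTable_map_iff {R S : Type*} [CommRing R] [CommRing S] (φ : R →+* S)
    (L : κ → Matrix κ κ R) (e : κ) :
    IsMulTable (fun k => (L k).map φ) e ↔
      (∀ k l, φ.mapMatrix (L k * L l) = φ.mapMatrix (∑ m, L k m l • L m)) ∧
      (∀ k l, φ.mapMatrix (L k * L l) = φ.mapMatrix (L l * L k)) ∧
      φ.mapMatrix (L e) = φ.mapMatrix 1 ∧
      φ.mapMatrix (Matrix.of fun m k => L k m e) = φ.mapMatrix 1 := by
  simp only [map_mul, map_sum, map_one, RingHom.mapMatrix_apply,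
    Matrix.map_smul' _ _ _ (map_mul φ)]
  exact ⟨fun ⟨h₁, h₂, h₃, h₄⟩ => ⟨h₁, h₂, h₃, h₄⟩, fun ⟨h₁, h₂, h₃, h₄⟩ => ⟨h₁, h₂, h₃, h₄⟩⟩

theorem isMulTable_leftMulMatrix {A B : Type*} [CommRing A] [CommRing B] [Algebra A B]
    (b : Module.Basis κ A B) {e : κ} (hb : b e = 1) :
    IsMulTable (fun k => Algebra.leftMulMatrix b (b k)) e where
  mul_eq_sum k l := by
    simp_rw [Algebra.leftMulMatrix_eq_repr_mul, ← map_mul, ← map_smul, ← map_sum, b.sum_repr]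
  commute k l := (Commute.all (b k) (b l)).map _
  unit_eq_one := by rw [hb, map_one]
  col_eq_one := by
    ext m k
    simp [Algebra.leftMulMatrix_eq_repr_mul, hb, Matrix.one_apply, Finsupp.single_apply, eq_comm]

namespace IsMulTable

variable {R : Type*} [CommRing R] {L : κ → Matrix κ κ R} {e : κ} (hL : IsMulTable L e)

/-- The proof is an argument only so that the commutative ring structure can depend on it. -/
def Alg (_ : IsMulTable L e) : Type _ := Algebra.adjoin R (Set.range L)

include hL

theorem apply_unit (k m : κ) : L k m e = (1 : Matrix κ κ R) m k :=
  Matrix.ext_iff.2 hL.col_eq_one m k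

theorem linearIndependent : LinearIndependent R L := by
  refine Fintype.linearIndependent_iff.2 fun c hc k => ?_
  simpa [Matrix.sum_apply, hL.apply_unit, Matrix.one_apply] using Matrix.ext_iff.2 hc k e

theorem mul_mem_span {x y : Matrix κ κ R} (hx : x ∈ Submodule.span R (Set.range L))
    (hy : y ∈ Submodule.span R (Set.range L)) : x * y ∈ Submodule.span R (Set.range L) := by
  have : Submodule.span R (Set.range L) * Submodule.span R (Set.range L) ≤
      Submodule.span R (Set.range L) := by
    rw [Submodule.span_mul_span, Submodule.span_le]
    rintro _ ⟨_, ⟨k, rfl⟩, _, ⟨l, rfl⟩, rfl⟩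
    dsimp only
    rw [hL.mul_eq_sum]
    exact Submodule.sum_mem _ fun m _ => Submodule.smul_mem _ _ (Submodule.subset_span ⟨m, rfl⟩)
  exact this (Submodule.mul_mem_mul hx hy)

theorem adjoin_eq_span :
    Subalgebra.toSubmodule (Algebra.adjoin R (Set.range L)) = Submodule.span R (Set.range L) :=
  Algebra.adjoin_eq_span_of_subset R fun _ hx =>
    Submonoid.closure_induction (fun _ hx => Submodule.subset_span hx)
      (hL.unit_eq_one ▸ Submodule.subset_span ⟨e, rfl⟩) (fun _ _ _ _ => hL.mul_mem_span) hx

open scoped IsMulCommutative in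
instance : CommRing hL.Alg :=
  have := Algebra.isMulCommutative_adjoin R (s := Set.range L)
    (by rintro _ ⟨k, rfl⟩ _ ⟨l, rfl⟩; exact hL.commute k l)
  inferInstanceAs (CommRing (Algebra.adjoin R (Set.range L)))

instance : Algebra R hL.Alg := inferInstanceAs (Algebra R (Algebra.adjoin R (Set.range L)))

def val : hL.Alg →ₐ[R] Matrix κ κ R := (Algebra.adjoin R (Set.range L)).val

noncomputable def basis : Module.Basis κ R hL.Alg :=
  ((Module.Basis.span hL.linearIndependent).map (LinearEquiv.ofEq _ _ hL.adjoin_eq_span.symm)).map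
    (Subalgebra.toSubmoduleEquiv _)

theorem val_basis (k : κ) : hL.val (hL.basis k) = L k :=
  congrArg Subtype.val (Module.Basis.span_apply hL.linearIndependent k)

variable {A B : Type*} [CommRing A] [CommRing B] [Algebra R A] [Algebra A B] [Algebra R B]
  [IsScalarTower R A B] (b : Module.Basis κ A B)
  (hLb : ∀ k, (L k).map (algebraMap R A) = Algebra.leftMulMatrix b (b k))

noncomputable def toAlgHom : hL.Alg →ₐ[R] B :=
  let lmul := (Algebra.leftMulMatrix b).restrictScalars R
  have hle : Algebra.adjoin R (Set.range L) ≤ lmul.range.comap (Algebra.ofId R A).mapMatrix :=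
    Algebra.adjoin_le (Set.range_subset_iff.2 fun k => ⟨b k, (hLb k).symm⟩)
  (AlgEquiv.ofInjective lmul (Algebra.leftMulMatrix_injective b)).symm.toAlgHom.comp
    (((Algebra.ofId R A).mapMatrix.comp hL.val).codRestrict _ fun x => hle x.2)

theorem leftMulMatrix_toAlgHom (x : hL.Alg) :
    Algebra.leftMulMatrix b (hL.toAlgHom b hLb x) = (hL.val x).map (algebraMap R A) := by
  let lmul := (Algebra.leftMulMatrix b).restrictScalars R
  have hinj : Function.Injective lmul := Algebra.leftMulMatrix_injective b
  exact (AlgEquiv.ofInjective_apply lmul hinj _).symm.trans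
    (congrArg Subtype.val ((AlgEquiv.ofInjective lmul hinj).apply_symm_apply _))

theorem toAlgHom_basis (k : κ) : hL.toAlgHom b hLb (hL.basis k) = b k :=
  Algebra.leftMulMatrix_injective b <| by rw [leftMulMatrix_toAlgHom, val_basis, hLb]

noncomputable def tensorAlgEquiv : A ⊗[R] hL.Alg ≃ₐ[A] B :=
  let Ψ := Algebra.TensorProduct.lift (Algebra.ofId A B) (hL.toAlgHom b hLb) fun _ _ => .all _ _
  let tb := Algebra.TensorProduct.basis A hL.basis
  have hΨ : Ψ.toLinearMap = (tb.equiv b (Equiv.refl κ)).toLinearMap :=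
    tb.ext fun k => by
      rw [LinearEquiv.coe_toLinearMap, Module.Basis.equiv_apply]
      simp [Ψ, tb, hL.toAlgHom_basis]
  AlgEquiv.ofBijective Ψ <| by
    rw [← AlgHom.coe_toLinearMap, hΨ]
    exact (tb.equiv b _).bijective

end IsMulTable

section FilteredColimit

variable {ι : Type*} [Preorder ι] {Aι : ι → Type*} {A : Type*}
  (f : ∀ i j, i ≤ j → Aι i → Aι j) (g : ∀ i, Aι i → A)

theorem eventually_exists_map_eq (hg : ∀ i j (hij : i ≤ j) x, g j (f i j hij x) = g i x)
    (hsurj : ∀ a : A, ∃ i x, g i x = a) (a : A) : ∀ᶠ i in atTop, ∃ x, g i x = a := by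
  obtain ⟨i₀, x, rfl⟩ := hsurj a
  exact (eventually_ge_atTop i₀).mono fun i hi => ⟨f i₀ i hi x, hg i₀ i hi x⟩

theorem eventually_map_eq_map
    (hf_comp : ∀ i j k (hij : i ≤ j) (hjk : j ≤ k) x,
      f j k hjk (f i j hij x) = f i k (hij.trans hjk) x)
    (hexact : ∀ i x y, g i x = g i y → ∃ j, ∃ hij : i ≤ j, f i j hij x = f i j hij y)
    {i : ι} {x y : Aι i} (h : g i x = g i y) :
    ∀ᶠ j in atTop, ∀ hij : i ≤ j, f i j hij x = f i j hij y := by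
  obtain ⟨j₀, hij₀, hj₀⟩ := hexact i x y h
  filter_upwards [eventually_ge_atTop j₀] with j hj hij
  rw [← hf_comp i j₀ j hij₀ hj, ← hf_comp i j₀ j hij₀ hj, hj₀]

variable {m m' : Type*} [Finite m] [Finite m']

theorem eventually_exists_matrix_map_eq (hg : ∀ i j (hij : i ≤ j) x, g j (f i j hij x) = g i x)
    (hsurj : ∀ a : A, ∃ i x, g i x = a) (M : Matrix m m' A) :
    ∀ᶠ i in atTop, ∃ N : Matrix m m' (Aι i), N.map (g i) = M := by
  have := eventually_all.2 fun p => eventually_all.2 fun q =>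
    eventually_exists_map_eq f g hg hsurj (M p q)
  filter_upwards [this] with i hi
  choose N hN using hi
  exact ⟨N, Matrix.ext hN⟩

theorem eventually_matrix_map_eq_map
    (hf_comp : ∀ i j k (hij : i ≤ j) (hjk : j ≤ k) x,
      f j k hjk (f i j hij x) = f i k (hij.trans hjk) x)
    (hexact : ∀ i x y, g i x = g i y → ∃ j, ∃ hij : i ≤ j, f i j hij x = f i j hij y)
    {i : ι} {M N : Matrix m m' (Aι i)} (h : M.map (g i) = N.map (g i)) :
    ∀ᶠ j in atTop, ∀ hij : i ≤ j, M.map (f i j hij) = N.map (f i j hij) := by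
  have := eventually_all.2 fun p => eventually_all.2 fun q =>
    eventually_map_eq_map f g hf_comp hexact (Matrix.ext_iff.2 h p q)
  filter_upwards [this] with j hj hij
  exact Matrix.ext fun p q => hj p q hij

end FilteredColimit

theorem eventually_isMulTable_map {ι : Type*} [Preorder ι] {Aι : ι → Type*}
    [∀ i, CommRing (Aι i)] {A : Type*} [CommRing A] (f : ∀ i j, i ≤ j → Aι i →+* Aι j)
    (g : ∀ i, Aι i →+* A)
    (hf_comp : ∀ i j k (hij : i ≤ j) (hjk : j ≤ k) x,
      f j k hjk (f i j hij x) = f i k (hij.trans hjk) x)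
    (hexact : ∀ i x y, g i x = g i y → ∃ j, ∃ hij : i ≤ j, f i j hij x = f i j hij y)
    {i : ι} (L : κ → Matrix κ κ (Aι i)) {e : κ} (hL : IsMulTable (fun k => (L k).map (g i)) e) :
    ∀ᶠ j in atTop, ∀ hij : i ≤ j, IsMulTable (fun k => (L k).map (f i j hij)) e := by
  obtain ⟨hmul, hcomm, hone, hcol⟩ := (isMulTable_map_iff _ _ _).1 hL
  have transfer {M N : Matrix κ κ (Aι i)} (h : (g i).mapMatrix M = (g i).mapMatrix N) :
      ∀ᶠ j in atTop, ∀ hij : i ≤ j, (f i j hij).mapMatrix M = (f i j hij).mapMatrix N :=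
    eventually_matrix_map_eq_map (f · · ·) (g ·) hf_comp hexact h
  filter_upwards [eventually_all.2 fun k => eventually_all.2 fun l => transfer (hmul k l),
    eventually_all.2 fun k => eventually_all.2 fun l => transfer (hcomm k l),
    transfer hone, transfer hcol] with j hmul hcomm hone hcol hij
  exact (isMulTable_map_iff _ _ _).2
    ⟨fun k l => hmul k l hij, fun k l => hcomm k l hij, hone hij, hcol hij⟩

theorem finite_free_algebra_descends_along_filtered_colimit_general
    {ι : Type v} [Preorder ι] [IsDirected ι (· ≤ ·)] [Nonempty ι]
    (Aι : ι → Type u) [∀ i, CommRing (Aι i)]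
    (f : ∀ i j, i ≤ j → Aι i →+* Aι j)
    (hf_comp : ∀ i j k (hij : i ≤ j) (hjk : j ≤ k) x,
      f j k hjk (f i j hij x) = f i k (hij.trans hjk) x)
    {A : Type u} [CommRing A] (g : ∀ i, Aι i →+* A)
    (hg : ∀ i j (hij : i ≤ j) x, g j (f i j hij x) = g i x)
    (hsurj : ∀ a : A, ∃ i x, g i x = a)
    (hexact : ∀ i x y, g i x = g i y → ∃ j, ∃ hij : i ≤ j, f i j hij x = f i j hij y)
    {B : Type u} [CommRing B] [Algebra A B]
    (n : ℕ) (hn : 0 < n) (b : Module.Basis (Fin n) A B) (hb : b ⟨0, hn⟩ = 1) :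
    ∃ (i : ι) (P : AlgebraPkg (Aι i)) (_ : Module.Basis (Fin n) (Aι i) P.carrier),
      Nonempty (letI := (g i).toAlgebra; (A ⊗[Aι i] P.carrier) ≃ₐ[A] B) := by
  obtain ⟨i₀, hi₀⟩ := (eventually_all.2 fun k => eventually_exists_matrix_map_eq
    (f · · ·) (g ·) hg hsurj (Algebra.leftMulMatrix b (b k))).exists
  choose L hL using hi₀
  have hL₀ : IsMulTable (fun k => (L k).map (g i₀)) ⟨0, hn⟩ := by
    simp_rw [hL]
    exact isMulTable_leftMulMatrix b hb
  obtain ⟨j, hLj, hij⟩ :=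
    ((eventually_isMulTable_map f g hf_comp hexact L hL₀).and (eventually_ge_atTop i₀)).exists
  let := (g j).toAlgebra
  let : Algebra (Aι j) B := ((algebraMap A B).comp (g j)).toAlgebra
  have : IsScalarTower (Aι j) A B := IsScalarTower.of_algebraMap_eq fun _ => rfl
  refine ⟨j, ⟨(hLj hij).Alg⟩, (hLj hij).basis, ⟨(hLj hij).tensorAlgEquiv b fun k => ?_⟩⟩
  rw [← hL, Matrix.map_map]
  exact congrArg _ (funext (hg i₀ j hij))

theorem finite_free_algebra_descends_along_filtered_colimit
    {ι : Type v} [Preorder ι] [IsDirected ι (· ≤ ·)] [Nonempty ι]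
    (Aι : ι → Type u) [∀ i, CommRing (Aι i)]
    (f : ∀ i j, i ≤ j → Aι i →+* Aι j)
    (hf_id : ∀ i x, f i i le_rfl x = x)
    (hf_comp : ∀ i j k (hij : i ≤ j) (hjk : j ≤ k) x,
      f j k hjk (f i j hij x) = f i k (hij.trans hjk) x)
    {A : Type u} [CommRing A] (g : ∀ i, Aι i →+* A)
    (hg : ∀ i j (hij : i ≤ j) x, g j (f i j hij x) = g i x)
    (hsurj : ∀ a : A, ∃ i x, g i x = a)
    (hexact : ∀ i x y, g i x = g i y → ∃ j, ∃ hij : i ≤ j, f i j hij x = f i j hij y)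
    {B : Type u} [CommRing B] [Algebra A B]
    (n : ℕ) (hn : 0 < n) (b : Module.Basis (Fin n) A B) (hb : b ⟨0, hn⟩ = 1) :
    ∃ (i : ι) (P : AlgebraPkg (Aι i)) (_ : Module.Basis (Fin n) (Aι i) P.carrier),
      Nonempty (letI := (g i).toAlgebra; (A ⊗[Aι i] P.carrier) ≃ₐ[A] B) :=
  finite_free_algebra_descends_along_filtered_colimit_general Aι f hf_comp g hg hsurj hexact n hn b
    hb
end

section
/- Let R be a valuation ring and f : Y → Spec(R) a proper morphism of schemes which is completely decomposed. Then f admits a section, i.e. there is a morphism s : Spec(R) → Y with f ∘ s = id. -/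
/-!
The generic point of `Spec R` lifts to `Y` with the same residue field `K = Frac R`, which gives a
`K`-point of `Y` over `R`. Since `f` is proper, the valuative criterion extends it to an `R`-point
of `Y`, i.e. to a section of `f`.
-/

open AlgebraicGeometry CategoryTheory

/-- A morphism of schemes is completely decomposed if every point of the target lifts to a
point of the source with isomorphic residue field. -/
def AlgebraicGeometry.Scheme.Hom.CompletelyDecomposed {Y X : AlgebraicGeometry.Scheme}
    (f : Y ⟶ X) : Prop :=
  ∀ x : X, ∃ y : Y, f.base y = x ∧ Function.Bijective (f.residueFieldMap y)

namespace AlgebraicGeometry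

universe u

lemma UniversallyClosed.valuativeCriterion_existence {X Y : Scheme.{u}} (f : X ⟶ Y)
    [UniversallyClosed f] : ValuativeCriterion.Existence f := by
  rw [UniversallyClosed.eq_valuativeCriterion] at ‹UniversallyClosed f›
  exact ‹(ValuativeCriterion.Existence ⊓ @QuasiCompact) f›.1

lemma UniversallyClosed.exists_section_of_fractionRing_point {R : CommRingCat.{u}} {K : Type u}
    [IsDomain R] [ValuationRing R] [Field K] [Algebra R K] [IsFractionRing R K] {Y : Scheme.{u}}
    (f : Y ⟶ Spec R) [UniversallyClosed f] (g : Spec (.of K) ⟶ Y)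
    (hg : g ≫ f = Spec.map (CommRingCat.ofHom (algebraMap R K))) :
    ∃ s : Spec R ⟶ Y, s ≫ f = 𝟙 _ := by
  let S : ValuativeCommSq f :=
    { R := R, K := K, i₁ := g, i₂ := 𝟙 _, commSq := ⟨by rw [hg, Category.comp_id]⟩ }
  obtain ⟨⟨s, -, hs⟩⟩ := (valuativeCriterion_existence f S).exists_lift
  exact ⟨s, hs⟩

lemma Scheme.Hom.exists_lift_fromSpecResidueField {X Y : Scheme.{u}} (f : Y ⟶ X) {y : Y} {x : X}
    (hx : f.base y = x) (hbij : Function.Bijective (f.residueFieldMap y)) :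
    ∃ g : Spec (X.residueField x) ⟶ Y, g ≫ f = X.fromSpecResidueField x := by
  subst hx
  have : IsIso (f.residueFieldMap y) := (ConcreteCategory.isIso_iff_bijective _).mpr hbij
  refine ⟨Spec.map (inv (f.residueFieldMap y)) ≫ Y.fromSpecResidueField y, ?_⟩
  rw [Category.assoc, ← SpecMap_residueFieldMap_fromSpecResidueField, ← Spec.map_comp_assoc,
    IsIso.hom_inv_id, Spec.map_id, Category.id_comp]

lemma Scheme.isIso_residue_of_isField {X : Scheme.{u}} {x : X} (hx : IsField (X.presheaf.stalk x)) :
    IsIso (X.residue x) := by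
  let := hx.toField
  exact (ConcreteCategory.isIso_iff_bijective _).mpr
    ⟨RingHom.injective _, residue_surjective X x⟩

lemma Scheme.Hom.exists_lift_fromSpecStalk_of_isField {X Y : Scheme.{u}} (f : Y ⟶ X) {y : Y}
    {x : X} (hx : f.base y = x) (hbij : Function.Bijective (f.residueFieldMap y))
    (hfield : IsField (X.presheaf.stalk x)) :
    ∃ g : Spec (X.presheaf.stalk x) ⟶ Y, g ≫ f = X.fromSpecStalk x := by
  have := Scheme.isIso_residue_of_isField hfield
  obtain ⟨g, hg⟩ := f.exists_lift_fromSpecResidueField hx hbij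
  refine ⟨Spec.map (inv (X.residue x)) ≫ g, ?_⟩
  rw [Category.assoc, hg, Scheme.fromSpecResidueField, ← Spec.map_comp_assoc, IsIso.hom_inv_id,
    Spec.map_id, Category.id_comp]

lemma Spec.map_algebraMap_functionField (R : CommRingCat.{u}) [IsDomain R] :
    Spec.map (CommRingCat.ofHom (algebraMap R (Spec R).functionField)) =
      (Spec R).fromSpecStalk (genericPoint (Spec R)) := by
  rw [Spec.fromSpecStalk_eq']
  rfl

lemma UniversallyClosed.exists_section_of_completelyDecomposed {R : CommRingCat.{u}} [IsDomain R]
    [ValuationRing R] {Y : Scheme.{u}} (f : Y ⟶ Spec R) [UniversallyClosed f]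
    (hcd : f.CompletelyDecomposed) : ∃ s : Spec R ⟶ Y, s ≫ f = 𝟙 _ := by
  obtain ⟨y, hy, hbij⟩ := hcd (genericPoint _)
  obtain ⟨g, hg⟩ := f.exists_lift_fromSpecStalk_of_isField hy hbij (Field.toIsField _)
  rw [← Spec.map_algebraMap_functionField] at hg
  exact exists_section_of_fractionRing_point f g hg

end AlgebraicGeometry

theorem proper_completelyDecomposed_over_valuationRing_has_section
    {R : Type} [CommRing R] [IsDomain R] [ValuationRing R]
    {Y : AlgebraicGeometry.Scheme} (f : Y ⟶ AlgebraicGeometry.Spec (CommRingCat.of R))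
    [AlgebraicGeometry.IsProper f]
    (hcd : AlgebraicGeometry.Scheme.Hom.CompletelyDecomposed f) :
    ∃ s : AlgebraicGeometry.Spec (CommRingCat.of R) ⟶ Y, s ≫ f = 𝟙 _ := by
  have : IsDomain (CommRingCat.of R) := ‹IsDomain R›
  have : ValuationRing (CommRingCat.of R) := ‹ValuationRing R›
  exact UniversallyClosed.exists_section_of_completelyDecomposed f hcd
end
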